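/- arXiv:2109.01741 — 4 statements merged into one kernel-verified Lean document; each statement's English description precedes it below -/
import Mathlib

section
/- (Result 2) Cov(η̄_t, μ*_t) = 0, and Cov(μ_t, μ*_t) = Var(μ*_t); in particular, if Var(μ*_t) > 0 then Cov(μ_t, μ*_t)/Var(μ*_t) = 1. -/
open MeasureTheory Finset

/-- Covariance of two real random variables: E[fg] − E[f]E[g]. -/
noncomputable def cov {Ω : Type*} [MeasurableSpace Ω] (P : Measure Ω) (f g : Ω → ℝ) : ℝ :=
  (∫ ω, f ω * g ω ∂P) - (∫ ω, f ω ∂P) * (∫ ω, g ω ∂P)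

private lemma l2_mul_integrable {Ω : Type*} [MeasurableSpace Ω] {P : Measure Ω}
    {f g : Ω → ℝ} (hf : MemLp f 2 P) (hg : MemLp g 2 P) :
    Integrable (fun ω => f ω * g ω) P := by
  have h : MemLp (f • g) 1 P := hg.smul hf
  exact memLp_one_iff_integrable.mp h

/-- Result 2: Cov(η̄_t, μ*_t) = 0 and Cov(μ_t, μ*_t) = Var(μ*_t);
in particular if Var(μ*_t) > 0 then Cov(μ_t, μ*_t)/Var(μ*_t) = 1. -/
theorem statement1
    {Ω : Type*} [MeasurableSpace Ω] (P : Measure Ω) [IsProbabilityMeasure P]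
    (T : ℕ) (hT : 2 ≤ T) (t : Fin T)
    (μ ε η : Fin T → Ω → ℝ)
    (hμL2 : ∀ s, MemLp (μ s) 2 P) (hεL2 : ∀ s, MemLp (ε s) 2 P)
    (hηL2 : ∀ s, MemLp (η s) 2 P)
    (hμ0 : ∀ s, ∫ ω, μ s ω ∂P = 0) (hε0 : ∀ s, ∫ ω, ε s ω ∂P = 0)
    (hη0 : ∀ s, ∫ ω, η s ω ∂P = 0)
    (R : Fin T → Ω → ℝ) (hR : ∀ s ω, R s ω = μ s ω + ε s ω)
    (hsort1 : ∀ s u, ∫ ω, ε s ω * μ u ω ∂P = 0)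
    (hsort2 : ∀ s, s ≠ t → ∫ ω, η t ω * μ s ω ∂P = 0)
    (hsort3 : ∀ s, s ≠ t → ∫ ω, η t ω * ε s ω ∂P = 0)
    (hsort4 : ∀ s, s ≠ t → ∫ ω, ε t ω * ε s ω ∂P = 0)
    (φ : Fin T → ℝ)
    (hNE : ∀ u, u ≠ t →
      ∫ ω, R u ω * (R t ω - ∑ s ∈ univ.erase t, φ s * R s ω) ∂P = 0)
    (μstar : Ω → ℝ) (hμstar : ∀ ω, μstar ω = ∑ s ∈ univ.erase t, φ s * R s ω) :
    cov P (η t) μstar = 0 ∧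
    cov P (μ t) μstar = cov P μstar μstar ∧
    (0 < cov P μstar μstar → cov P (μ t) μstar / cov P μstar μstar = 1) := by
  have one_le : (1:ENNReal) ≤ 2 := one_le_two
  have hRL2 : ∀ s, MemLp (R s) 2 P := by
    intro s
    have : R s = fun ω => μ s ω + ε s ω := funext (hR s)
    rw [this]; exact (hμL2 s).add (hεL2 s)
  have hμstarL2 : MemLp μstar 2 P := by
    have : μstar = fun ω => ∑ s ∈ univ.erase t, φ s * R s ω := funext hμstar
    rw [this]
    exact memLp_finset_sum _ (fun s _ => (hRL2 s).const_mul (φ s))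
  have hRint : ∀ s, Integrable (R s) P := fun s => (hRL2 s).integrable one_le
  have hR0 : ∀ s, ∫ ω, R s ω ∂P = 0 := by
    intro s
    have : (∫ ω, R s ω ∂P) = ∫ ω, (μ s ω + ε s ω) ∂P := by
      apply integral_congr_ae; filter_upwards with ω; rw [hR]
    rw [this, integral_add ((hμL2 s).integrable one_le) ((hεL2 s).integrable one_le),
      hμ0, hε0, add_zero]
  have hμstar0 : ∫ ω, μstar ω ∂P = 0 := by
    have : (∫ ω, μstar ω ∂P) = ∫ ω, (∑ s ∈ univ.erase t, φ s * R s ω) ∂P := by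
      apply integral_congr_ae; filter_upwards with ω; rw [hμstar]
    rw [this, integral_finset_sum _ (fun s _ => (hRint s).const_mul (φ s))]
    refine Finset.sum_eq_zero fun s _ => ?_
    rw [integral_const_mul, hR0, mul_zero]
  -- key expansion lemma
  have key : ∀ f : Ω → ℝ, MemLp f 2 P →
      (∫ ω, f ω * μstar ω ∂P) = ∑ s ∈ univ.erase t, φ s * ∫ ω, f ω * R s ω ∂P := by
    intro f hf
    have h1 : (∫ ω, f ω * μstar ω ∂P)
        = ∫ ω, (∑ s ∈ univ.erase t, φ s * (f ω * R s ω)) ∂P := by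
      apply integral_congr_ae; filter_upwards with ω
      rw [hμstar, Finset.mul_sum]
      exact Finset.sum_congr rfl fun s _ => by ring
    rw [h1, integral_finset_sum _ (fun s _ => (l2_mul_integrable hf (hRL2 s)).const_mul (φ s))]
    exact Finset.sum_congr rfl fun s _ => integral_const_mul _ _
  have hprod : ∀ (f g : Fin T → Ω → ℝ), (∀ s, MemLp (f s) 2 P) → ∀ s u,
      Integrable (fun ω => f s ω * g u ω) P → True := fun _ _ _ _ _ _ => trivial
  -- ∫ f * R s = ∫ f * μ s + ∫ f * ε s
  have split : ∀ (f : Ω → ℝ), MemLp f 2 P → ∀ s,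
      (∫ ω, f ω * R s ω ∂P) = (∫ ω, f ω * μ s ω ∂P) + ∫ ω, f ω * ε s ω ∂P := by
    intro f hf s
    have h1 : (∫ ω, f ω * R s ω ∂P) = ∫ ω, (f ω * μ s ω + f ω * ε s ω) ∂P := by
      apply integral_congr_ae; filter_upwards with ω; rw [hR]; ring
    rw [h1, integral_add (l2_mul_integrable hf (hμL2 s)) (l2_mul_integrable hf (hεL2 s))]
  -- E[η_t μ*] = 0
  have hημ : (∫ ω, η t ω * μstar ω ∂P) = 0 := by
    rw [key (η t) (hηL2 t)]
    refine Finset.sum_eq_zero fun s hs => ?_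
    have hst : s ≠ t := (Finset.mem_erase.mp hs).1
    rw [split (η t) (hηL2 t) s, hsort2 s hst, hsort3 s hst, add_zero, mul_zero]
  -- E[ε_t μ*] = 0
  have hεμ : (∫ ω, ε t ω * μstar ω ∂P) = 0 := by
    rw [key (ε t) (hεL2 t)]
    refine Finset.sum_eq_zero fun s hs => ?_
    have hst : s ≠ t := (Finset.mem_erase.mp hs).1
    rw [split (ε t) (hεL2 t) s, hsort1 t s, hsort4 s hst, add_zero, mul_zero]
  -- orthogonality: ∫ μ* (R t - μ*) = 0
  have horth : (∫ ω, μstar ω * (R t ω - μstar ω) ∂P) = 0 := by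
    have hg : MemLp (fun ω => R t ω - μstar ω) 2 P := (hRL2 t).sub hμstarL2
    have h1 : (∫ ω, μstar ω * (R t ω - μstar ω) ∂P)
        = ∫ ω, (∑ s ∈ univ.erase t, φ s * (R s ω * (R t ω - μstar ω))) ∂P := by
      apply integral_congr_ae; filter_upwards with ω
      rw [hμstar, Finset.sum_mul]
      exact Finset.sum_congr rfl fun s _ => by ring
    rw [h1, integral_finset_sum _ (fun s _ => (l2_mul_integrable (hRL2 s) hg).const_mul (φ s))]
    refine Finset.sum_eq_zero fun s hs => ?_
    have hst : s ≠ t := (Finset.mem_erase.mp hs).1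
    rw [integral_const_mul]
    have h2 : (∫ ω, R s ω * (R t ω - μstar ω) ∂P)
        = ∫ ω, R s ω * (R t ω - ∑ u ∈ univ.erase t, φ u * R u ω) ∂P := by
      apply integral_congr_ae; filter_upwards with ω; rw [hμstar]
    rw [h2, hNE s hst, mul_zero]
  -- ∫ μ* R t = ∫ μ* μ*
  have hsq : (∫ ω, μstar ω * R t ω ∂P) = ∫ ω, μstar ω * μstar ω ∂P := by
    have h1 : (∫ ω, μstar ω * (R t ω - μstar ω) ∂P)
        = (∫ ω, μstar ω * R t ω ∂P) - ∫ ω, μstar ω * μstar ω ∂P := by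
      rw [← integral_sub (l2_mul_integrable hμstarL2 (hRL2 t))
        (l2_mul_integrable hμstarL2 hμstarL2)]
      apply integral_congr_ae; filter_upwards with ω; ring
    have := horth; rw [h1] at this; linarith
  -- ∫ μ_t μ* = ∫ μ* μ*
  have hmain : (∫ ω, μ t ω * μstar ω ∂P) = ∫ ω, μstar ω * μstar ω ∂P := by
    have h1 : (∫ ω, μstar ω * R t ω ∂P) = ∫ ω, R t ω * μstar ω ∂P := by
      apply integral_congr_ae; filter_upwards with ω; ring
    have h2 : (∫ ω, R t ω * μstar ω ∂P)
        = (∫ ω, μ t ω * μstar ω ∂P) + ∫ ω, ε t ω * μstar ω ∂P := by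
      have h3 : (∫ ω, R t ω * μstar ω ∂P)
          = ∫ ω, (μ t ω * μstar ω + ε t ω * μstar ω) ∂P := by
        apply integral_congr_ae; filter_upwards with ω; rw [hR]; ring
      rw [h3, integral_add (l2_mul_integrable (hμL2 t) hμstarL2)
        (l2_mul_integrable (hεL2 t) hμstarL2)]
    rw [← hsq, h1, h2, hεμ, add_zero]
  refine ⟨?_, ?_, ?_⟩
  · simp [cov, hημ, hη0, hμstar0]
  · simp [cov, hmain, hμ0, hμstar0]
  · intro h
    rw [show cov P (μ t) μstar = cov P μstar μstar by simp [cov, hmain, hμ0, hμstar0]]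
    exact div_self (ne_of_gt h)
end

section
/- (Core of Corollary 1) Let φ = (φ_s)_{s ≠ t} be viewed as a vector in ℝ^{T−1}, let M be the (T−1)×(T−1) matrix with entries M_{s,u} = E[R̄_s · R̄_u] for s, u ≠ t, and let G_φ ∈ ℝ^{T−1} have components G_φ(s) = E[(Ȳ_t − 2 κ0 · μ*_t) · R̄_s]. Then G_φ = −κ0 · (M φ), and if M is positive definite and φ ≠ 0, then G_φ = 0 if and only if κ0 = 0. -/
open MeasureTheory Finset

/-- Core of Corollary 1: with φ viewed as a vector indexed by years s ≠ t,
M the Gram matrix M_{s,u} = E[R̄_s R̄_u] and G_φ(s) = E[(Ȳ_t − 2κ0 μ*_t) R̄_s], we have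
G_φ = −κ0 (M φ); and if M is positive definite and φ ≠ 0 then G_φ = 0 ↔ κ0 = 0. -/
theorem statement6
    {Ω : Type*} [MeasurableSpace Ω] (P : Measure Ω) [IsProbabilityMeasure P]
    (T : ℕ) (hT : 2 ≤ T) (t : Fin T)
    (μ ε η : Fin T → Ω → ℝ)
    (hμL2 : ∀ s, MemLp (μ s) 2 P) (hεL2 : ∀ s, MemLp (ε s) 2 P)
    (hηL2 : ∀ s, MemLp (η s) 2 P)
    (hμ0 : ∀ s, ∫ ω, μ s ω ∂P = 0) (hε0 : ∀ s, ∫ ω, ε s ω ∂P = 0)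
    (hη0 : ∀ s, ∫ ω, η s ω ∂P = 0)
    (R : Fin T → Ω → ℝ) (hR : ∀ s ω, R s ω = μ s ω + ε s ω)
    (hsort1 : ∀ s u, ∫ ω, ε s ω * μ u ω ∂P = 0)
    (hsort2 : ∀ s, s ≠ t → ∫ ω, η t ω * μ s ω ∂P = 0)
    (hsort3 : ∀ s, s ≠ t → ∫ ω, η t ω * ε s ω ∂P = 0)
    (hsort4 : ∀ s, s ≠ t → ∫ ω, ε t ω * ε s ω ∂P = 0)
    (φ : Fin T → ℝ)
    (hNE : ∀ u, u ≠ t →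
      ∫ ω, R u ω * (R t ω - ∑ s ∈ univ.erase t, φ s * R s ω) ∂P = 0)
    (μstar : Ω → ℝ) (hμstar : ∀ ω, μstar ω = ∑ s ∈ univ.erase t, φ s * R s ω)
    (κ0 : ℝ) (Y : Ω → ℝ) (hY : ∀ ω, Y ω = κ0 * μ t ω + η t ω)
    (φv : {s : Fin T // s ≠ t} → ℝ) (hφv : ∀ a, φv a = φ a.1)
    (M : Matrix {s : Fin T // s ≠ t} {s : Fin T // s ≠ t} ℝ)
    (hM : ∀ a b, M a b = ∫ ω, R a.1 ω * R b.1 ω ∂P)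
    (Gφ : {s : Fin T // s ≠ t} → ℝ)
    (hGφ : ∀ a, Gφ a = ∫ ω, (Y ω - 2 * κ0 * μstar ω) * R a.1 ω ∂P) :
    Gφ = (-κ0) • M.mulVec φv ∧
    (M.PosDef → φv ≠ 0 → (Gφ = 0 ↔ κ0 = 0)) := by
  classical
  -- product of two L² functions is integrable
  have hmul : ∀ (f g : Ω → ℝ), MemLp f 2 P → MemLp g 2 P →
      Integrable (fun ω => f ω * g ω) P := by
    intro f g hf hg
    refine (hf.integrable_sq.add hg.integrable_sq).mono' (hf.1.mul hg.1) ?_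
    filter_upwards with ω
    have h1 : |f ω| * |g ω| ≤ f ω ^ 2 + g ω ^ 2 := by
      nlinarith [sq_abs (f ω), sq_abs (g ω), sq_nonneg (|f ω| - |g ω|),
        abs_nonneg (f ω), abs_nonneg (g ω)]
    simpa [Real.norm_eq_abs, abs_mul] using h1
  have hReq : ∀ s, R s = fun ω => μ s ω + ε s ω := fun s => funext (hR s)
  have hRL2 : ∀ s, MemLp (R s) 2 P := by
    intro s; rw [hReq s]; exact (hμL2 s).add (hεL2 s)
  -- ∫ εt·Rb = 0 and ∫ ηt·Rb = 0 for b ≠ t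
  have hεR : ∀ b : Fin T, b ≠ t → ∫ ω, ε t ω * R b ω ∂P = 0 := by
    intro b hb
    have : ∫ ω, ε t ω * R b ω ∂P
        = ∫ ω, ε t ω * μ b ω ∂P + ∫ ω, ε t ω * ε b ω ∂P := by
      rw [← integral_add (hmul _ _ (hεL2 t) (hμL2 b)) (hmul _ _ (hεL2 t) (hεL2 b))]
      refine integral_congr_ae (Filter.Eventually.of_forall fun ω => ?_)
      simp only [hR]; ring
    rw [this, hsort1 t b, hsort4 b hb, add_zero]
  have hηR : ∀ b : Fin T, b ≠ t → ∫ ω, η t ω * R b ω ∂P = 0 := by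
    intro b hb
    have : ∫ ω, η t ω * R b ω ∂P
        = ∫ ω, η t ω * μ b ω ∂P + ∫ ω, η t ω * ε b ω ∂P := by
      rw [← integral_add (hmul _ _ (hηL2 t) (hμL2 b)) (hmul _ _ (hηL2 t) (hεL2 b))]
      refine integral_congr_ae (Filter.Eventually.of_forall fun ω => ?_)
      simp only [hR]; ring
    rw [this, hsort2 b hb, hsort3 b hb, add_zero]
  -- ∫ μt·Rb = ∫ Rt·Rb for b ≠ t
  have hμR : ∀ b : Fin T, b ≠ t →
      ∫ ω, μ t ω * R b ω ∂P = ∫ ω, R t ω * R b ω ∂P := by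
    intro b hb
    have h1 : ∫ ω, R t ω * R b ω ∂P
        = ∫ ω, μ t ω * R b ω ∂P + ∫ ω, ε t ω * R b ω ∂P := by
      rw [← integral_add (hmul _ _ (hμL2 t) (hRL2 b)) (hmul _ _ (hεL2 t) (hRL2 b))]
      refine integral_congr_ae (Filter.Eventually.of_forall fun ω => ?_)
      simp only [hR]; ring
    rw [h1, hεR b hb, add_zero]
  -- for b ≠ t, set S b := ∑ s ∈ erase t, φ s * ∫ Rs·Rb ; then ∫ μstar·Rb = S b
  have hμstarR : ∀ b : Fin T, ∫ ω, μstar ω * R b ω ∂P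
      = ∑ s ∈ univ.erase t, φ s * ∫ ω, R s ω * R b ω ∂P := by
    intro b
    have h1 : ∫ ω, μstar ω * R b ω ∂P
        = ∫ ω, ∑ s ∈ univ.erase t, φ s * (R s ω * R b ω) ∂P := by
      refine integral_congr_ae (Filter.Eventually.of_forall fun ω => ?_)
      simp only [hμstar, Finset.sum_mul]
      exact Finset.sum_congr rfl fun s _ => by ring
    rw [h1, integral_finset_sum _ fun s _ => (hmul _ _ (hRL2 s) (hRL2 b)).const_mul _]
    exact Finset.sum_congr rfl fun s _ => integral_const_mul _ _
  -- normal equation: ∫ Rt·Rb = S b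
  have hRtR : ∀ b : Fin T, b ≠ t → ∫ ω, R t ω * R b ω ∂P
      = ∑ s ∈ univ.erase t, φ s * ∫ ω, R s ω * R b ω ∂P := by
    intro b hb
    have h0 := hNE b hb
    have h1 : ∫ ω, R b ω * (R t ω - ∑ s ∈ univ.erase t, φ s * R s ω) ∂P
        = ∫ ω, R t ω * R b ω ∂P
          - ∑ s ∈ univ.erase t, φ s * ∫ ω, R s ω * R b ω ∂P := by
      have hint : Integrable (fun ω => ∑ s ∈ univ.erase t, φ s * (R s ω * R b ω)) P :=
        integrable_finset_sum _ fun s _ => (hmul _ _ (hRL2 s) (hRL2 b)).const_mul _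
      have h2 : ∫ ω, R b ω * (R t ω - ∑ s ∈ univ.erase t, φ s * R s ω) ∂P
          = ∫ ω, (R t ω * R b ω - ∑ s ∈ univ.erase t, φ s * (R s ω * R b ω)) ∂P := by
        refine integral_congr_ae (Filter.Eventually.of_forall fun ω => ?_)
        simp only [mul_sub, Finset.mul_sum]
        congr 1
        · ring
        · exact Finset.sum_congr rfl fun s _ => by ring
      rw [h2, integral_sub (hmul _ _ (hRL2 t) (hRL2 b)) hint,
        integral_finset_sum _ fun s _ => (hmul _ _ (hRL2 s) (hRL2 b)).const_mul _]
      congr 1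
      exact Finset.sum_congr rfl fun s _ => integral_const_mul _ _
    rw [h1] at h0
    linarith
  -- mulVec identity
  have hmulVec : ∀ a : {s : Fin T // s ≠ t},
      M.mulVec φv a = ∑ s ∈ univ.erase t, φ s * ∫ ω, R s ω * R a.1 ω ∂P := by
    intro a
    have hsub : ∑ s ∈ univ.erase t, φ s * ∫ ω, R s ω * R a.1 ω ∂P
        = ∑ x : {s : Fin T // s ≠ t}, φ x.1 * ∫ ω, R x.1 ω * R a.1 ω ∂P := by
      rw [← Finset.sum_subtype (univ.erase t)
        (fun x => by simp [Finset.mem_erase]) (fun s => φ s * ∫ ω, R s ω * R a.1 ω ∂P)]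
    rw [hsub]
    unfold Matrix.mulVec dotProduct
    refine Finset.sum_congr rfl fun x _ => ?_
    simp only [hM, hφv]
    have : ∫ ω, R a.1 ω * R x.1 ω ∂P = ∫ ω, R x.1 ω * R a.1 ω ∂P := by
      simp [mul_comm]
    rw [this]; ring
  -- main computation: Gφ a = -κ0 * (M.mulVec φv a)
  have hmain : ∀ a : {s : Fin T // s ≠ t}, Gφ a = -κ0 * (M.mulVec φv a) := by
    intro a
    obtain ⟨b, hb⟩ := a
    set S := ∑ s ∈ univ.erase t, φ s * ∫ ω, R s ω * R b ω ∂P with hS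
    have hYL2 : MemLp Y 2 P := by
      have : Y = fun ω => κ0 * μ t ω + η t ω := funext hY
      rw [this]; exact ((hμL2 t).const_mul κ0).add (hηL2 t)
    have hμstarL2 : MemLp μstar 2 P := by
      have heq : μstar = ∑ s ∈ univ.erase t, fun ω => φ s * R s ω := by
        funext ω; rw [hμstar]; simp
      rw [heq]
      exact memLp_finset_sum' _ fun s _ => (hRL2 s).const_mul (φ s)
    -- ∫ Y·Rb
    have hYR : ∫ ω, Y ω * R b ω ∂P = κ0 * S := by
      have h1 : ∫ ω, Y ω * R b ω ∂P
          = ∫ ω, κ0 * (μ t ω * R b ω) ∂P + ∫ ω, η t ω * R b ω ∂P := by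
        rw [← integral_add ((hmul _ _ (hμL2 t) (hRL2 b)).const_mul κ0)
          (hmul _ _ (hηL2 t) (hRL2 b))]
        refine integral_congr_ae (Filter.Eventually.of_forall fun ω => ?_)
        simp only [hY]; ring
      rw [h1, hηR b hb, add_zero, integral_const_mul, hμR b hb, hRtR b hb]
    -- Gφ
    have h2 : Gφ ⟨b, hb⟩ = ∫ ω, Y ω * R b ω ∂P
        - 2 * κ0 * ∫ ω, μstar ω * R b ω ∂P := by
      rw [hGφ]
      have h3 : ∫ ω, (Y ω - 2 * κ0 * μstar ω) * R b ω ∂P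
          = ∫ ω, (Y ω * R b ω - 2 * κ0 * (μstar ω * R b ω)) ∂P := by
        refine integral_congr_ae (Filter.Eventually.of_forall fun ω => ?_); ring
      rw [h3, integral_sub (hmul _ _ hYL2 (hRL2 b))
        ((hmul _ _ hμstarL2 (hRL2 b)).const_mul _), integral_const_mul]
    rw [h2, hYR, hμstarR b, hmulVec ⟨b, hb⟩]
    simp only [← hS]
    ring
  have hGeq : Gφ = (-κ0) • M.mulVec φv := by
    funext a
    rw [hmain a, Pi.smul_apply, smul_eq_mul]
  refine ⟨hGeq, fun hPD hφne => ?_⟩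
  constructor
  · intro h0
    by_contra hκ
    have hMv : M.mulVec φv ≠ 0 := by
      intro hmv
      have := hPD.dotProduct_mulVec_pos hφne
      rw [hmv] at this
      simp [dotProduct] at this
    rw [hGeq] at h0
    rcases smul_eq_zero.mp h0 with h | h
    · exact hκ (neg_eq_zero.mp h)
    · exact hMv h
  · intro hκ
    rw [hGeq, hκ, neg_zero, zero_smul]
end

section
/- (Heterogeneous treatment effects, Appendix B) Cov(Ȳ_t, μ*_t) = E[κ̄_t] · Var(μ*_t); in particular, if Var(μ*_t) > 0, the linear projection coefficient of Ȳ_t on μ*_t equals the mean treatment effect: Cov(Ȳ_t, μ*_t)/Var(μ*_t) = E[κ̄_t]. -/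
open MeasureTheory Finset

/-- Heterogeneous treatment effects, Appendix B:
Cov(Ȳ_t, μ*_t) = E[κ̄_t] Var(μ*_t); in particular, if Var(μ*_t) > 0 then
Cov(Ȳ_t, μ*_t)/Var(μ*_t) = E[κ̄_t]. -/
theorem statement7
    {Ω : Type*} [MeasurableSpace Ω] (P : Measure Ω) [IsProbabilityMeasure P]
    (T : ℕ) (hT : 2 ≤ T) (t : Fin T)
    (μ ε η : Fin T → Ω → ℝ)
    (hμL2 : ∀ s, MemLp (μ s) 2 P) (hεL2 : ∀ s, MemLp (ε s) 2 P)
    (hηL2 : ∀ s, MemLp (η s) 2 P)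
    (hμ0 : ∀ s, ∫ ω, μ s ω ∂P = 0) (hε0 : ∀ s, ∫ ω, ε s ω ∂P = 0)
    (hη0 : ∀ s, ∫ ω, η s ω ∂P = 0)
    (R : Fin T → Ω → ℝ) (hR : ∀ s ω, R s ω = μ s ω + ε s ω)
    (hsort1 : ∀ s u, ∫ ω, ε s ω * μ u ω ∂P = 0)
    (hsort2 : ∀ s, s ≠ t → ∫ ω, η t ω * μ s ω ∂P = 0)
    (hsort3 : ∀ s, s ≠ t → ∫ ω, η t ω * ε s ω ∂P = 0)
    (hsort4 : ∀ s, s ≠ t → ∫ ω, ε t ω * ε s ω ∂P = 0)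
    (φ : Fin T → ℝ)
    (hNE : ∀ u, u ≠ t →
      ∫ ω, R u ω * (R t ω - ∑ s ∈ univ.erase t, φ s * R s ω) ∂P = 0)
    (μstar : Ω → ℝ) (hμstar : ∀ ω, μstar ω = ∑ s ∈ univ.erase t, φ s * R s ω)
    (κbar : Ω → ℝ) (hκint : Integrable κbar P)
    (hκindep : ProbabilityTheory.Indep
      (MeasurableSpace.comap κbar Real.measurableSpace)
      (⨆ s : Fin T,
        MeasurableSpace.comap (μ s) Real.measurableSpace ⊔
        MeasurableSpace.comap (ε s) Real.measurableSpace ⊔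
        MeasurableSpace.comap (η s) Real.measurableSpace) P)
    (Y : Ω → ℝ) (hY : ∀ ω, Y ω = κbar ω * μ t ω + η t ω) :
    cov P Y μstar = (∫ ω, κbar ω ∂P) * cov P μstar μstar ∧
    (0 < cov P μstar μstar →
      cov P Y μstar / cov P μstar μstar = ∫ ω, κbar ω ∂P) := by
  classical
  -- product of two L2 functions is integrable
  have hmulInt : ∀ (f g : Ω → ℝ), MemLp f 2 P → MemLp g 2 P →
      Integrable (fun ω => f ω * g ω) P := by
    intro f g hf hg
    have hpqr : (1 : ENNReal) / 1 = 1 / 2 + 1 / 2 := by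
      have h22 : (2 : ENNReal) / 2 = 1 := ENNReal.div_self (by norm_num) (by norm_num)
      rw [div_one, ENNReal.div_add_div_same, one_add_one_eq_two, h22]
    have h : MemLp (f • g) 1 P := hg.smul hf (hpqr := ⟨by rw [inv_one]; exact ENNReal.inv_two_add_inv_two⟩)
    have := memLp_one_iff_integrable.mp h
    exact this
  have hRf : ∀ s, R s = fun ω => μ s ω + ε s ω := fun s => funext (hR s)
  have hRL2 : ∀ s, MemLp (R s) 2 P := by
    intro s; rw [hRf s]; exact (hμL2 s).add (hεL2 s)
  have hμstarf : μstar = fun ω => ∑ s ∈ univ.erase t, φ s * R s ω := funext hμstar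
  have hμstarL2 : MemLp μstar 2 P := by
    rw [hμstarf]
    exact memLp_finset_sum _ (fun s _ => (hRL2 s).const_mul (φ s))
  have hRint : ∀ s, Integrable (R s) P := fun s => (hRL2 s).integrable one_le_two
  have hRint0 : ∀ s, ∫ ω, R s ω ∂P = 0 := by
    intro s
    simp_rw [hR s]
    rw [integral_add ((hμL2 s).integrable one_le_two) ((hεL2 s).integrable one_le_two),
      hμ0 s, hε0 s, add_zero]
  have hμstar0 : ∫ ω, μstar ω ∂P = 0 := by
    simp_rw [hμstar]
    rw [integral_finset_sum _ (fun s _ => (hRint s).const_mul (φ s))]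
    refine Finset.sum_eq_zero fun s _ => ?_
    rw [integral_const_mul, hRint0 s, mul_zero]
  -- ∫ μstar * ε t = 0
  have hεμstar : ∫ ω, μstar ω * ε t ω ∂P = 0 := by
    have hfe : (fun ω => μstar ω * ε t ω)
        = fun ω => ∑ s ∈ univ.erase t, φ s * (R s ω * ε t ω) := by
      funext ω
      rw [hμstar ω, Finset.sum_mul]
      exact Finset.sum_congr rfl fun s _ => mul_assoc _ _ _
    rw [hfe, integral_finset_sum _
      (fun s _ => (hmulInt _ _ (hRL2 s) (hεL2 t)).const_mul (φ s))]
    refine Finset.sum_eq_zero fun s hs => ?_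
    have hst : s ≠ t := (Finset.mem_erase.mp hs).1
    rw [integral_const_mul]
    have hRs : (fun ω => R s ω * ε t ω) = fun ω => μ s ω * ε t ω + ε s ω * ε t ω := by
      funext ω; rw [hR s ω, add_mul]
    have h1 : ∫ ω, μ s ω * ε t ω ∂P = 0 := by
      rw [show (fun ω => μ s ω * ε t ω) = fun ω => ε t ω * μ s ω from
        funext fun ω => mul_comm _ _]
      exact hsort1 t s
    have h2 : ∫ ω, ε s ω * ε t ω ∂P = 0 := by
      rw [show (fun ω => ε s ω * ε t ω) = fun ω => ε t ω * ε s ω from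
        funext fun ω => mul_comm _ _]
      exact hsort4 s hst
    rw [hRs, integral_add (hmulInt _ _ (hμL2 s) (hεL2 t)) (hmulInt _ _ (hεL2 s) (hεL2 t)),
      h1, h2, add_zero, mul_zero]
  -- ∫ η t * μstar = 0
  have hημstar : ∫ ω, η t ω * μstar ω ∂P = 0 := by
    have hfe : (fun ω => η t ω * μstar ω)
        = fun ω => ∑ s ∈ univ.erase t, φ s * (η t ω * R s ω) := by
      funext ω
      rw [hμstar ω, Finset.mul_sum]
      exact Finset.sum_congr rfl fun s _ => by ring
    rw [hfe, integral_finset_sum _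
      (fun s _ => (hmulInt _ _ (hηL2 t) (hRL2 s)).const_mul (φ s))]
    refine Finset.sum_eq_zero fun s hs => ?_
    have hst : s ≠ t := (Finset.mem_erase.mp hs).1
    rw [integral_const_mul]
    have hRs : (fun ω => η t ω * R s ω) = fun ω => η t ω * μ s ω + η t ω * ε s ω := by
      funext ω; rw [hR s ω, mul_add]
    rw [hRs, integral_add (hmulInt _ _ (hηL2 t) (hμL2 s)) (hmulInt _ _ (hηL2 t) (hεL2 s)),
      hsort2 s hst, hsort3 s hst, add_zero, mul_zero]
  -- orthogonality from the normal equations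
  have hNE' : ∀ u, u ≠ t → ∫ ω, R u ω * (R t ω - μstar ω) ∂P = 0 := by
    intro u hu
    simp_rw [hμstar]
    exact hNE u hu
  have hdiffL2 : MemLp (fun ω => R t ω - μstar ω) 2 P := (hRL2 t).sub hμstarL2
  have hortho : ∫ ω, μstar ω * (R t ω - μstar ω) ∂P = 0 := by
    have hfe : (fun ω => μstar ω * (R t ω - μstar ω))
        = fun ω => ∑ s ∈ univ.erase t, φ s * (R s ω * (R t ω - μstar ω)) := by
      funext ω
      rw [hμstar ω, Finset.sum_mul]
      exact Finset.sum_congr rfl fun s _ => mul_assoc _ _ _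
    rw [hfe, integral_finset_sum _
      (fun s _ => (hmulInt _ _ (hRL2 s) hdiffL2).const_mul (φ s))]
    refine Finset.sum_eq_zero fun s hs => ?_
    rw [integral_const_mul, hNE' s (Finset.mem_erase.mp hs).1, mul_zero]
  -- ∫ μstar * R t = ∫ μstar²
  have key1 : ∫ ω, μstar ω * R t ω ∂P = ∫ ω, μstar ω * μstar ω ∂P := by
    have hfe : (fun ω => μstar ω * (R t ω - μstar ω))
        = fun ω => μstar ω * R t ω - μstar ω * μstar ω := by
      funext ω; ring
    rw [hfe, integral_sub (hmulInt _ _ hμstarL2 (hRL2 t)) (hmulInt _ _ hμstarL2 hμstarL2),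
      sub_eq_zero] at hortho
    exact hortho
  -- ∫ μ t * μstar = ∫ μstar²
  have key2 : ∫ ω, μ t ω * μstar ω ∂P = ∫ ω, μstar ω * μstar ω ∂P := by
    have hfe : (fun ω => μstar ω * R t ω)
        = fun ω => μ t ω * μstar ω + μstar ω * ε t ω := by
      funext ω; rw [hR t ω]; ring
    rw [hfe, integral_add (hmulInt _ _ (hμL2 t) hμstarL2) (hmulInt _ _ hμstarL2 (hεL2 t)),
      hεμstar, add_zero] at key1
    exact key1
  -- independence of κbar and μ t * μstar
  have hIndepF : ProbabilityTheory.IndepFun κbar (fun ω => μ t ω * μstar ω) P := by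
    rw [ProbabilityTheory.IndepFun_iff_Indep]
    refine ProbabilityTheory.indep_of_indep_of_le_right hκindep (Measurable.comap_le ?_)
    set m2 := (⨆ s : Fin T,
      MeasurableSpace.comap (μ s) Real.measurableSpace ⊔
      MeasurableSpace.comap (ε s) Real.measurableSpace ⊔
      MeasurableSpace.comap (η s) Real.measurableSpace) with hm2
    have hle : ∀ s : Fin T,
        MeasurableSpace.comap (μ s) Real.measurableSpace ⊔
        MeasurableSpace.comap (ε s) Real.measurableSpace ⊔
        MeasurableSpace.comap (η s) Real.measurableSpace ≤ m2 := fun s =>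
      le_iSup (fun s : Fin T =>
        MeasurableSpace.comap (μ s) Real.measurableSpace ⊔
        MeasurableSpace.comap (ε s) Real.measurableSpace ⊔
        MeasurableSpace.comap (η s) Real.measurableSpace) s
    have hμm : ∀ s, Measurable[m2] (μ s) := fun s =>
      Measurable.of_comap_le ((le_sup_left.trans le_sup_left).trans (hle s))
    have hεm : ∀ s, Measurable[m2] (ε s) := fun s =>
      Measurable.of_comap_le ((le_sup_right.trans le_sup_left).trans (hle s))
    have hμstarm : Measurable[m2] μstar := by
      rw [hμstarf]
      refine Finset.measurable_sum _ fun s _ => Measurable.const_mul ?_ (φ s)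
      rw [hRf s]
      exact (hμm s).add (hεm s)
    exact (hμm t).mul hμstarm
  have hZint : Integrable (fun ω => μ t ω * μstar ω) P := hmulInt _ _ (hμL2 t) hμstarL2
  have hκZint : Integrable (fun ω => κbar ω * (μ t ω * μstar ω)) P := by
    have := hIndepF.integrable_mul hκint hZint
    exact this
  have hκZ : ∫ ω, κbar ω * (μ t ω * μstar ω) ∂P
      = (∫ ω, κbar ω ∂P) * ∫ ω, μ t ω * μstar ω ∂P := by
    have := hIndepF.integral_mul_eq_mul_integral hκint.1 hZint.1
    simpa [Pi.mul_apply] using this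
  -- compute ∫ Y * μstar
  have hYμ : ∫ ω, Y ω * μstar ω ∂P
      = (∫ ω, κbar ω ∂P) * ∫ ω, μstar ω * μstar ω ∂P := by
    have hfe : (fun ω => Y ω * μstar ω)
        = fun ω => κbar ω * (μ t ω * μstar ω) + η t ω * μstar ω := by
      funext ω; rw [hY ω]; ring
    rw [hfe, integral_add hκZint (hmulInt _ _ (hηL2 t) hμstarL2), hημstar, add_zero,
      hκZ, key2]
  have hcov : cov P Y μstar = (∫ ω, κbar ω ∂P) * cov P μstar μstar := by
    unfold cov
    rw [hμstar0, mul_zero, mul_zero, sub_zero, sub_zero, hYμ]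
  refine ⟨hcov, fun hpos => ?_⟩
  rw [hcov]
  exact mul_div_cancel_right₀ _ (ne_of_gt hpos)
end

section
/- (Robustness of the overidentified moments to heterogeneous effects, Appendix B) For every year s ≠ t, E[R̄_s · (Ȳ_t − E[κ̄_t] · R̄_t)] = 0; i.e., the instrumental-variable moment conditions hold with κ0 replaced by the mean treatment effect E[κ̄_t]. -/
open MeasureTheory Finset

/-- Robustness of the overidentified moments to heterogeneous effects,
Appendix B: for every year s ≠ t, E[R̄_s · (Ȳ_t − E[κ̄_t] R̄_t)] = 0. -/
theorem statement8
    {Ω : Type*} [MeasurableSpace Ω] (P : Measure Ω) [IsProbabilityMeasure P]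
    (T : ℕ) (hT : 2 ≤ T) (t : Fin T)
    (μ ε η : Fin T → Ω → ℝ)
    (hμL2 : ∀ s, MemLp (μ s) 2 P) (hεL2 : ∀ s, MemLp (ε s) 2 P)
    (hηL2 : ∀ s, MemLp (η s) 2 P)
    (hμ0 : ∀ s, ∫ ω, μ s ω ∂P = 0) (hε0 : ∀ s, ∫ ω, ε s ω ∂P = 0)
    (hη0 : ∀ s, ∫ ω, η s ω ∂P = 0)
    (R : Fin T → Ω → ℝ) (hR : ∀ s ω, R s ω = μ s ω + ε s ω)
    (hsort1 : ∀ s u, ∫ ω, ε s ω * μ u ω ∂P = 0)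
    (hsort2 : ∀ s, s ≠ t → ∫ ω, η t ω * μ s ω ∂P = 0)
    (hsort3 : ∀ s, s ≠ t → ∫ ω, η t ω * ε s ω ∂P = 0)
    (hsort4 : ∀ s, s ≠ t → ∫ ω, ε t ω * ε s ω ∂P = 0)
    (κbar : Ω → ℝ) (hκint : Integrable κbar P)
    (hκindep : ProbabilityTheory.Indep
      (MeasurableSpace.comap κbar Real.measurableSpace)
      (⨆ s : Fin T,
        MeasurableSpace.comap (μ s) Real.measurableSpace ⊔
        MeasurableSpace.comap (ε s) Real.measurableSpace ⊔
        MeasurableSpace.comap (η s) Real.measurableSpace) P)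
    (Y : Ω → ℝ) (hY : ∀ ω, Y ω = κbar ω * μ t ω + η t ω) :
    ∀ s, s ≠ t →
      ∫ ω, R s ω * (Y ω - (∫ ω', κbar ω' ∂P) * R t ω) ∂P = 0 := by
  intro s hst
  have hmulInt : ∀ (f g : Ω → ℝ), MemLp f 2 P → MemLp g 2 P →
      Integrable (fun ω => f ω * g ω) P := by
    intro f g hf hg
    have h : MemLp (f • g) 1 P :=
      hg.smul (r := 1) hf
    exact memLp_one_iff_integrable.mp h
  set c : ℝ := ∫ ω', κbar ω' ∂P with hc
  set M : MeasurableSpace Ω := ⨆ s : Fin T,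
      MeasurableSpace.comap (μ s) Real.measurableSpace ⊔
      MeasurableSpace.comap (ε s) Real.measurableSpace ⊔
      MeasurableSpace.comap (η s) Real.measurableSpace with hM
  have hμM : ∀ u, Measurable[M] (μ u) := fun u => by
    refine measurable_iff_comap_le.mpr (le_trans ?_ (le_iSup _ u))
    exact le_trans le_sup_left le_sup_left
  have hεM : ∀ u, Measurable[M] (ε u) := fun u => by
    refine measurable_iff_comap_le.mpr (le_trans ?_ (le_iSup _ u))
    exact le_trans le_sup_right le_sup_left
  have hIF : ProbabilityTheory.IndepFun κbar (fun ω => R s ω * μ t ω) P := by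
    rw [ProbabilityTheory.IndepFun_iff_Indep]
    refine ProbabilityTheory.indep_of_indep_of_le_right hκindep ?_
    refine measurable_iff_comap_le.mp ?_
    have hRs : Measurable[M] (R s) := by
      have h := (hμM s).add (hεM s)
      convert h using 1
      funext ω; exact hR s ω
    exact hRs.mul (hμM t)
  have hRsL2 : MemLp (R s) 2 P := by
    have h := (hμL2 s).add (hεL2 s)
    refine h.ae_eq ?_
    filter_upwards with ω
    exact (hR s ω).symm
  have hRtL2 : MemLp (R t) 2 P := by
    have h := (hμL2 t).add (hεL2 t)
    refine h.ae_eq ?_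
    filter_upwards with ω
    exact (hR t ω).symm
  have hRsμt : Integrable (fun ω => R s ω * μ t ω) P := hmulInt _ _ hRsL2 (hμL2 t)
  have hRsηt : Integrable (fun ω => R s ω * η t ω) P := hmulInt _ _ hRsL2 (hηL2 t)
  have hRsRt : Integrable (fun ω => R s ω * R t ω) P := hmulInt _ _ hRsL2 hRtL2
  have hκRsμt : Integrable (fun ω => κbar ω * (R s ω * μ t ω)) P :=
    hIF.integrable_mul hκint hRsμt
  have hInt1 : ∫ ω, κbar ω * (R s ω * μ t ω) ∂P = c * ∫ ω, R s ω * μ t ω ∂P :=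
    hIF.integral_mul_eq_mul_integral hκint.aestronglyMeasurable hRsμt.aestronglyMeasurable
  have hμsμt : Integrable (fun ω => μ s ω * μ t ω) P := hmulInt _ _ (hμL2 s) (hμL2 t)
  have hεsμt : Integrable (fun ω => ε s ω * μ t ω) P := hmulInt _ _ (hεL2 s) (hμL2 t)
  have hεtμs : Integrable (fun ω => ε t ω * μ s ω) P := hmulInt _ _ (hεL2 t) (hμL2 s)
  have hεtεs : Integrable (fun ω => ε t ω * ε s ω) P := hmulInt _ _ (hεL2 t) (hεL2 s)
  have hηtμs : Integrable (fun ω => η t ω * μ s ω) P := hmulInt _ _ (hηL2 t) (hμL2 s)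
  have hηtεs : Integrable (fun ω => η t ω * ε s ω) P := hmulInt _ _ (hηL2 t) (hεL2 s)
  have hRsμt_val : ∫ ω, R s ω * μ t ω ∂P = ∫ ω, μ s ω * μ t ω ∂P := by
    have h : ∫ ω, R s ω * μ t ω ∂P
        = ∫ ω, (μ s ω * μ t ω + ε s ω * μ t ω) ∂P := by
      refine integral_congr_ae ?_
      filter_upwards with ω
      rw [hR s ω]; ring
    rw [h, integral_add hμsμt hεsμt, hsort1 s t, add_zero]
  have hRsηt_val : ∫ ω, R s ω * η t ω ∂P = 0 := by
    have h : ∫ ω, R s ω * η t ω ∂P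
        = ∫ ω, (η t ω * μ s ω + η t ω * ε s ω) ∂P := by
      refine integral_congr_ae ?_
      filter_upwards with ω
      rw [hR s ω]; ring
    rw [h, integral_add hηtμs hηtεs, hsort2 s hst, hsort3 s hst, add_zero]
  have hRsRt_val : ∫ ω, R s ω * R t ω ∂P = ∫ ω, μ s ω * μ t ω ∂P := by
    have h : ∫ ω, R s ω * R t ω ∂P
        = ∫ ω, (μ s ω * μ t ω + (ε t ω * μ s ω + (ε s ω * μ t ω + ε t ω * ε s ω))) ∂P := by
      refine integral_congr_ae ?_
      filter_upwards with ω
      rw [hR s ω, hR t ω]; ring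
    have g1 : Integrable (fun ω => ε s ω * μ t ω + ε t ω * ε s ω) P := hεsμt.add hεtεs
    have g2 : Integrable (fun ω => ε t ω * μ s ω + (ε s ω * μ t ω + ε t ω * ε s ω)) P :=
      hεtμs.add g1
    rw [h, integral_add hμsμt g2, integral_add hεtμs g1, integral_add hεsμt hεtεs,
      hsort1 t s, hsort1 s t, hsort4 s hst]
    simp
  have hexp : ∫ ω, R s ω * (Y ω - c * R t ω) ∂P
      = ∫ ω, (κbar ω * (R s ω * μ t ω) + R s ω * η t ω - c * (R s ω * R t ω)) ∂P := by
    refine integral_congr_ae ?_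
    filter_upwards with ω
    rw [hY ω]; ring
  have hadd : Integrable (fun ω => κbar ω * (R s ω * μ t ω) + R s ω * η t ω) P :=
    hκRsμt.add hRsηt
  rw [hexp, integral_sub hadd (hRsRt.const_mul c),
    integral_add hκRsμt hRsηt, integral_const_mul, hInt1, hRsμt_val, hRsηt_val,
    hRsRt_val, add_zero, sub_self]
end
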